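/- Let F be a nonempty subset of {0,1}^{V×[L]} (the feasible assignments) whose complement is also nonempty, and define Δ_min = min_{x∉F} H_partition(x) − min_{x∈F} H_partition(x). Suppose the penalties P_1, …, P_L are lexicographically admissible, Δ_min > 0, and A > (n · ∑_{k=1}^{L} P_k) / Δ_min. Then every global minimizer x* of H_GP^log(x) = A·H_partition(x) + H_lex(x) belongs to F. -/
import Mathlib


open Finset

/-- The partition term of the general logarithmic graph partitioning HUBO:
`∑_{{u,v}∈E} [α_{uv}·∏_k (x_{u,k} ⊙ x_{v,k}) + β_{uv}·(1 − ∏_k (x_{u,k} ⊙ x_{v,k}))]`,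
where `a ⊙ b = 2ab − a − b + 1` is the XNOR of bits. -/
noncomputable def Hpartition {V : Type*} [Fintype V] [DecidableEq V]
    (G : SimpleGraph V) [DecidableRel G.Adj] (L : ℕ)
    (α β : Sym2 V → ℝ) (x : V → ℕ → ℝ) : ℝ :=
  ∑ e ∈ G.edgeFinset,
    Sym2.lift
      ⟨fun u v =>
          α e * (∏ k ∈ Finset.Icc 1 L,
              (2 * x u k * x v k - x u k - x v k + 1)) +
          β e * (1 - ∏ k ∈ Finset.Icc 1 L,
              (2 * x u k * x v k - x u k - x v k + 1)),
        fun u v => by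
          have h : (∏ k ∈ Finset.Icc 1 L,
                (2 * x u k * x v k - x u k - x v k + 1)) =
              ∏ k ∈ Finset.Icc 1 L,
                (2 * x v k * x u k - x v k - x u k + 1) :=
            Finset.prod_congr rfl (fun _ _ => by ring)
          simp only []
          rw [h]⟩ e

/-- Lexicographic penalty term: `∑_{k=1}^{L} P_k ∑_{v∈V} x_{v,k}`. -/
noncomputable def HlexGP {V : Type*} [Fintype V] (L : ℕ) (P : ℕ → ℝ)
    (x : V → ℕ → ℝ) : ℝ :=
  ∑ k ∈ Finset.Icc 1 L, P k * ∑ v : V, x v k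

/-- Sufficient partition penalty for general logarithmic graph partitioning
HUBOs with hard constraints: if the penalties are lexicographically
admissible, the feasibility gap `Δ_min` is positive, and
`A > n·∑_k P_k / Δ_min`, then every global minimizer of
`A·H_partition + H_lex` is feasible. -/
theorem general_partition_penalty_sufficient
    {V : Type*} [Fintype V] [DecidableEq V] [Nonempty V]
    (G : SimpleGraph V) [DecidableRel G.Adj]
    (L : ℕ) (hL : 1 ≤ L)
    (α β : Sym2 V → ℝ)
    (P : ℕ → ℝ) (hPpos : ∀ k ∈ Finset.Icc 1 L, 0 < P k)
    (hadm : ∀ k ∈ Finset.Icc 1 (L - 1),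
      (Fintype.card V : ℝ) * ∑ j ∈ Finset.Icc 1 k, P j < P (k + 1))
    (F : Set (V → ℕ → ℝ))
    (hFne : ∃ x0 : V → ℕ → ℝ,
      (∀ v, ∀ k ∈ Finset.Icc 1 L, x0 v k = 0 ∨ x0 v k = 1) ∧ x0 ∈ F)
    (hFcne : ∃ x1 : V → ℕ → ℝ,
      (∀ v, ∀ k ∈ Finset.Icc 1 L, x1 v k = 0 ∨ x1 v k = 1) ∧ x1 ∉ F)
    (Hfeas Hinf : ℝ)
    (hHfeas : IsLeast {E : ℝ | ∃ x : V → ℕ → ℝ,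
      (∀ v, ∀ k ∈ Finset.Icc 1 L, x v k = 0 ∨ x v k = 1) ∧ x ∈ F ∧
      Hpartition G L α β x = E} Hfeas)
    (hHinf : IsLeast {E : ℝ | ∃ x : V → ℕ → ℝ,
      (∀ v, ∀ k ∈ Finset.Icc 1 L, x v k = 0 ∨ x v k = 1) ∧ x ∉ F ∧
      Hpartition G L α β x = E} Hinf)
    (hgap : 0 < Hinf - Hfeas)
    (A : ℝ) (hApos : 0 < A)
    (hA : ((Fintype.card V : ℝ) * ∑ k ∈ Finset.Icc 1 L, P k) /
        (Hinf - Hfeas) < A)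
    (x : V → ℕ → ℝ)
    (hx : ∀ v, ∀ k ∈ Finset.Icc 1 L, x v k = 0 ∨ x v k = 1)
    (hmin : ∀ x' : V → ℕ → ℝ,
      (∀ v, ∀ k ∈ Finset.Icc 1 L, x' v k = 0 ∨ x' v k = 1) →
      A * Hpartition G L α β x + HlexGP L P x ≤
        A * Hpartition G L α β x' + HlexGP L P x') :
    x ∈ F := by
  by_contra hxF
  obtain ⟨x0, hx0bin, hx0F, hx0H⟩ := hHfeas.1
  have hxinf : Hinf ≤ Hpartition G L α β x := hHinf.2 ⟨x, hx, hxF, rfl⟩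
  have hmin0 := hmin x0 hx0bin
  have hlex_x_nonneg : 0 ≤ HlexGP L P x := by
    apply Finset.sum_nonneg
    intro k hk
    apply mul_nonneg (hPpos k hk).le
    apply Finset.sum_nonneg
    intro v _
    rcases hx v k hk with h | h <;> simp [h]
  have hlex_x0_le : HlexGP L P x0 ≤ (Fintype.card V : ℝ) * ∑ k ∈ Finset.Icc 1 L, P k := by
    rw [Finset.mul_sum]
    apply Finset.sum_le_sum
    intro k hk
    rw [mul_comm ((Fintype.card V : ℝ)) (P k)]
    apply mul_le_mul_of_nonneg_left _ (hPpos k hk).le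
    calc ∑ v : V, x0 v k ≤ ∑ v : V, 1 := by
          apply Finset.sum_le_sum
          intro v _
          rcases hx0bin v k hk with h | h <;> simp [h]
      _ = (Fintype.card V : ℝ) := by simp
  have hAge : ((Fintype.card V : ℝ) * ∑ k ∈ Finset.Icc 1 L, P k) < A * (Hinf - Hfeas) :=
    (div_lt_iff₀ hgap).mp hA
  nlinarith [hmin0, hxinf, hx0H]
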